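/- Let (X, 𝒜) be a measurable space, P a probability measure on X, and k : X × X → ℝ a bounded measurable symmetric kernel. Fix y ∈ X and let (X_n)_{n ≥ 1} be a sequence of independent random variables defined on a probability space (Ω, ℱ, ℙ), each with law P. For m ≥ 2 define the estimator φ̂_m := (1/(m(m−1))) ∑_{1 ≤ i ≠ j ≤ m} k(X_i, X_j) − (2/m) ∑_{i=1}^m k(X_i, y). Then φ̂_m is a strongly consistent estimator of the kernel score: almost surely, φ̂_m → φ_k(P, y) as m → ∞. -/

import Mathlib

open MeasureTheory Filter

private lemma tendsto_nat_sqrt_atTop : Tendsto (fun n : ℕ => Nat.sqrt n) atTop atTop :=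
  tendsto_atTop_atTop_of_monotone (fun _ _ h => Nat.sqrt_le_sqrt h)
    (fun b => ⟨b ^ 2, by rw [Nat.sqrt_eq']⟩)

private lemma card_filter_overlap (m : ℕ) :
    ((((Finset.range m).offDiag ×ˢ (Finset.range m).offDiag).filter
      (fun r : (ℕ × ℕ) × ℕ × ℕ =>
        r.1.1 = r.2.1 ∨ r.1.1 = r.2.2 ∨ r.1.2 = r.2.1 ∨ r.1.2 = r.2.2)).card)
      ≤ 4 * m ^ 3 := by
  classical
  set S := (Finset.range m).offDiag ×ˢ (Finset.range m).offDiag with hS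
  have key : ∀ (p : ((ℕ × ℕ) × ℕ × ℕ) → Prop) (_ : DecidablePred p)
      (f : ((ℕ × ℕ) × ℕ × ℕ) → ℕ × ℕ × ℕ)
      (_ : ∀ r ∈ S.filter p, f r ∈ Finset.range m ×ˢ Finset.range m ×ˢ Finset.range m)
      (_ : ∀ r ∈ S.filter p, ∀ s ∈ S.filter p, f r = f s → r = s),
      (S.filter p).card ≤ m ^ 3 := by
    intro p _ f hmaps hinj
    calc (S.filter p).card ≤ (Finset.range m ×ˢ Finset.range m ×ˢ Finset.range m).card :=
          Finset.card_le_card_of_injOn f hmaps hinj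
      _ = m ^ 3 := by simp [Finset.card_product]; ring
  have h1 : (S.filter (fun r : (ℕ × ℕ) × ℕ × ℕ => r.1.1 = r.2.1)).card ≤ m ^ 3 := by
    refine key _ _ (fun r => (r.1.1, r.1.2, r.2.2)) ?_ ?_
    · rintro ⟨⟨a, b⟩, ⟨c, d⟩⟩ hr
      simp only [hS, Finset.mem_filter, Finset.mem_product, Finset.mem_offDiag] at hr ⊢
      tauto
    · rintro ⟨⟨a, b⟩, ⟨c, d⟩⟩ hr ⟨⟨a', b'⟩, ⟨c', d'⟩⟩ hs h
      simp only [hS, Finset.mem_filter, Finset.mem_product, Finset.mem_offDiag,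
        Prod.mk.injEq] at hr hs h ⊢
      omega
  have h2 : (S.filter (fun r : (ℕ × ℕ) × ℕ × ℕ => r.1.1 = r.2.2)).card ≤ m ^ 3 := by
    refine key _ _ (fun r => (r.1.1, r.1.2, r.2.1)) ?_ ?_
    · rintro ⟨⟨a, b⟩, ⟨c, d⟩⟩ hr
      simp only [hS, Finset.mem_filter, Finset.mem_product, Finset.mem_offDiag] at hr ⊢
      tauto
    · rintro ⟨⟨a, b⟩, ⟨c, d⟩⟩ hr ⟨⟨a', b'⟩, ⟨c', d'⟩⟩ hs h
      simp only [hS, Finset.mem_filter, Finset.mem_product, Finset.mem_offDiag,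
        Prod.mk.injEq] at hr hs h ⊢
      omega
  have h3 : (S.filter (fun r : (ℕ × ℕ) × ℕ × ℕ => r.1.2 = r.2.1)).card ≤ m ^ 3 := by
    refine key _ _ (fun r => (r.1.1, r.1.2, r.2.2)) ?_ ?_
    · rintro ⟨⟨a, b⟩, ⟨c, d⟩⟩ hr
      simp only [hS, Finset.mem_filter, Finset.mem_product, Finset.mem_offDiag] at hr ⊢
      tauto
    · rintro ⟨⟨a, b⟩, ⟨c, d⟩⟩ hr ⟨⟨a', b'⟩, ⟨c', d'⟩⟩ hs h
      simp only [hS, Finset.mem_filter, Finset.mem_product, Finset.mem_offDiag,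
        Prod.mk.injEq] at hr hs h ⊢
      omega
  have h4 : (S.filter (fun r : (ℕ × ℕ) × ℕ × ℕ => r.1.2 = r.2.2)).card ≤ m ^ 3 := by
    refine key _ _ (fun r => (r.1.1, r.1.2, r.2.1)) ?_ ?_
    · rintro ⟨⟨a, b⟩, ⟨c, d⟩⟩ hr
      simp only [hS, Finset.mem_filter, Finset.mem_product, Finset.mem_offDiag] at hr ⊢
      tauto
    · rintro ⟨⟨a, b⟩, ⟨c, d⟩⟩ hr ⟨⟨a', b'⟩, ⟨c', d'⟩⟩ hs h
      simp only [hS, Finset.mem_filter, Finset.mem_product, Finset.mem_offDiag,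
        Prod.mk.injEq] at hr hs h ⊢
      omega
  calc ((S.filter (fun r : (ℕ × ℕ) × ℕ × ℕ =>
        r.1.1 = r.2.1 ∨ r.1.1 = r.2.2 ∨ r.1.2 = r.2.1 ∨ r.1.2 = r.2.2)).card)
      ≤ ((S.filter (fun r : (ℕ × ℕ) × ℕ × ℕ => r.1.1 = r.2.1)) ∪
          (S.filter (fun r : (ℕ × ℕ) × ℕ × ℕ => r.1.1 = r.2.2)) ∪
          (S.filter (fun r : (ℕ × ℕ) × ℕ × ℕ => r.1.2 = r.2.1)) ∪
          (S.filter (fun r : (ℕ × ℕ) × ℕ × ℕ => r.1.2 = r.2.2))).card := by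
        apply Finset.card_le_card
        intro r hr
        simp only [Finset.mem_filter, Finset.mem_union] at hr ⊢
        tauto
    _ ≤ _ := by
        refine le_trans (Finset.card_union_le _ _) ?_
        refine le_trans (Nat.add_le_add_right (Finset.card_union_le _ _) _) ?_
        refine le_trans (Nat.add_le_add_right (Nat.add_le_add_right (Finset.card_union_le _ _) _) _) ?_
        omega



set_option maxHeartbeats 1000000 in
private lemma interp_tendsto (D : ℝ) (hD : 0 ≤ D) (a : ℕ → ℝ)
    (ha : ∀ j m : ℕ, j ≤ m →
      |a m - a j| ≤ D * ((m : ℝ) * ((m : ℝ) - 1) - (j : ℝ) * ((j : ℝ) - 1)))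
    (h0 : a 0 = 0)
    (hsub : Tendsto (fun n : ℕ =>
      (((n ^ 2 : ℕ) : ℝ) * (((n ^ 2 : ℕ) : ℝ) - 1))⁻¹ * a (n ^ 2)) atTop (nhds 0)) :
    Tendsto (fun m : ℕ => ((m : ℝ) * ((m : ℝ) - 1))⁻¹ * a m) atTop (nhds 0) := by
  have key : ∀ m : ℕ, 16 ≤ m →
      |((m : ℝ) * ((m : ℝ) - 1))⁻¹ * a m| ≤
        |(((Nat.sqrt m ^ 2 : ℕ) : ℝ) * (((Nat.sqrt m ^ 2 : ℕ) : ℝ) - 1))⁻¹ * a (Nat.sqrt m ^ 2)|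
          + 24 * D / (Nat.sqrt m : ℝ) := by
    intro m hm
    set s := Nat.sqrt m with hs
    have hs4 : 4 ≤ s := by
      rw [hs]; exact Nat.le_sqrt.2 (by omega)
    have hjm : s ^ 2 ≤ m := Nat.sqrt_le' m
    have hmub : m ≤ s ^ 2 + 2 * s := by
      have := Nat.lt_succ_sqrt' m
      nlinarith [this]
    -- real versions
    set x : ℝ := (m : ℝ) with hx
    set t : ℝ := (s : ℝ) with ht
    have ht4 : (4 : ℝ) ≤ t := by rw [ht]; exact_mod_cast hs4
    have ht2x : t ^ 2 ≤ x := by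
      rw [hx, ht]; exact_mod_cast hjm
    have hxub : x ≤ t ^ 2 + 2 * t := by
      rw [hx, ht]; exact_mod_cast hmub
    have hcast : ((s ^ 2 : ℕ) : ℝ) = t ^ 2 := by push_cast; ring
    set M : ℝ := x * (x - 1) with hM
    set J : ℝ := t ^ 2 * (t ^ 2 - 1) with hJ
    have hx16 : (16 : ℝ) ≤ x := by nlinarith
    have hMpos : 0 < M := by nlinarith
    have ht16 : (16 : ℝ) ≤ t ^ 2 := by nlinarith
    have hJpos : 0 < J := by rw [hJ]; nlinarith
    have hJM : J ≤ M := by nlinarith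
    have habsm : |a m - a (s ^ 2)| ≤ D * (M - J) := by
      have := ha (s ^ 2) m hjm
      rwa [hcast] at this
    have habsj : |a (s ^ 2)| ≤ D * J := by
      have := ha 0 (s ^ 2) (Nat.zero_le _)
      simp only [h0, Nat.cast_zero, sub_zero] at this
      rw [hcast] at this
      convert this using 2
      ring
    -- decomposition
    have hdec : ((m : ℝ) * ((m : ℝ) - 1))⁻¹ * a m -
        (((s ^ 2 : ℕ) : ℝ) * (((s ^ 2 : ℕ) : ℝ) - 1))⁻¹ * a (s ^ 2)
        = (a m - a (s ^ 2)) / M - a (s ^ 2) * (M - J) / (M * J) := by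
      rw [hcast, ← hx, ← hM, ← hJ]
      field_simp
      ring
    have hb1 : |(a m - a (s ^ 2)) / M| ≤ D * (M - J) / M := by
      rw [abs_div, abs_of_pos hMpos]
      exact div_le_div_of_nonneg_right habsm hMpos.le
    have hb2 : |a (s ^ 2) * (M - J) / (M * J)| ≤ D * (M - J) / M := by
      rw [abs_div, abs_mul, abs_of_pos (mul_pos hMpos hJpos), abs_of_nonneg (by linarith : (0:ℝ) ≤ M - J)]
      have h1 : |a (s ^ 2)| * (M - J) ≤ (D * J) * (M - J) :=
        mul_le_mul_of_nonneg_right habsj (by linarith)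
      calc |a (s ^ 2)| * (M - J) / (M * J) ≤ (D * J) * (M - J) / (M * J) :=
            div_le_div_of_nonneg_right h1 (mul_pos hMpos hJpos).le
        _ = D * (M - J) / M := by field_simp
    have hfrac : 2 * (D * (M - J) / M) ≤ 24 * D / t := by
      have htpos : 0 < t := by linarith
      have hre : 2 * (D * (M - J) / M) = 2 * (D * (M - J)) / M := by ring
      rw [hre, div_le_div_iff₀ hMpos htpos]
      have hMJ : M - J = (x - t ^ 2) * (x + t ^ 2 - 1) := by rw [hM, hJ]; ring
      have h1 : (0:ℝ) ≤ x + t ^ 2 - 1 := by nlinarith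
      have h2 : x - t ^ 2 ≤ 2 * t := by linarith
      have h3 : x + t ^ 2 - 1 ≤ 2 * x := by linarith
      have hMJle : (M - J) * t ≤ 12 * M := by
        have e1 : (M - J) * t ≤ (2 * t) * (x + t ^ 2 - 1) * t := by
          rw [hMJ]
          have := mul_le_mul_of_nonneg_right
            (mul_le_mul_of_nonneg_right h2 h1) htpos.le
          linarith
        have e2 : (2 * t) * (x + t ^ 2 - 1) * t ≤ (2 * t) * (2 * x) * t := by
          have h4 := mul_le_mul_of_nonneg_left h3 (by positivity : (0:ℝ) ≤ 2 * t * t)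
          linear_combination h4
        have e4 : (2 * t) * (2 * x) * t ≤ 4 * x * x := by
          have h5 := mul_le_mul_of_nonneg_left ht2x (by positivity : (0:ℝ) ≤ 4 * x)
          linear_combination h5
        have e5 : 4 * x * x ≤ 12 * M := by rw [hM]; nlinarith
        linarith
      calc 2 * (D * (M - J)) * t = 2 * D * ((M - J) * t) := by ring
        _ ≤ 2 * D * (12 * M) := by
            apply mul_le_mul_of_nonneg_left hMJle (by linarith)
        _ = 24 * D * M := by ring
    calc |((m : ℝ) * ((m : ℝ) - 1))⁻¹ * a m|
        ≤ |(((s ^ 2 : ℕ) : ℝ) * (((s ^ 2 : ℕ) : ℝ) - 1))⁻¹ * a (s ^ 2)| +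
          |((m : ℝ) * ((m : ℝ) - 1))⁻¹ * a m -
            (((s ^ 2 : ℕ) : ℝ) * (((s ^ 2 : ℕ) : ℝ) - 1))⁻¹ * a (s ^ 2)| := by
          have := abs_sub_abs_le_abs_sub (((m : ℝ) * ((m : ℝ) - 1))⁻¹ * a m)
            ((((s ^ 2 : ℕ) : ℝ) * (((s ^ 2 : ℕ) : ℝ) - 1))⁻¹ * a (s ^ 2))
          linarith
      _ ≤ _ := by
          rw [hdec]
          have := abs_sub (a m - a (s ^ 2)) (a (s ^ 2) * (M - J))
          have htri : |(a m - a (s ^ 2)) / M - a (s ^ 2) * (M - J) / (M * J)| ≤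
              |(a m - a (s ^ 2)) / M| + |a (s ^ 2) * (M - J) / (M * J)| := abs_sub _ _
          linarith
  -- squeeze
  have habs : Tendsto (fun m : ℕ => |((m : ℝ) * ((m : ℝ) - 1))⁻¹ * a m|) atTop (nhds 0) := by
    apply squeeze_zero' (Eventually.of_forall fun m => abs_nonneg _)
      (eventually_atTop.2 ⟨16, key⟩)
    have hg1 : Tendsto (fun m : ℕ =>
        |(((Nat.sqrt m ^ 2 : ℕ) : ℝ) * (((Nat.sqrt m ^ 2 : ℕ) : ℝ) - 1))⁻¹ * a (Nat.sqrt m ^ 2)|)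
        atTop (nhds 0) := by
      have := (hsub.abs).comp tendsto_nat_sqrt_atTop
      simpa [Function.comp_def] using this
    have hg2 : Tendsto (fun m : ℕ => 24 * D / (Nat.sqrt m : ℝ)) atTop (nhds 0) :=
      (tendsto_const_div_atTop_nhds_zero_nat (24 * D)).comp tendsto_nat_sqrt_atTop
    simpa using hg1.add hg2
  exact squeeze_zero_norm (fun m => le_of_eq (Real.norm_eq_abs _)) habs


private lemma abs_integral_le_of_bdd {Y : Type*} [MeasurableSpace Y] (Q : MeasureTheory.Measure Y)
    [MeasureTheory.IsProbabilityMeasure Q] (f : Y → ℝ) (D : ℝ) (hf : ∀ x, |f x| ≤ D) :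
    |∫ x, f x ∂Q| ≤ D := by
  rw [← Real.norm_eq_abs]
  calc ‖∫ x, f x ∂Q‖ ≤ D * (Q Set.univ).toReal :=
        norm_integral_le_of_norm_le_const
          (Eventually.of_forall fun x => by rw [Real.norm_eq_abs]; exact hf x)
    _ = D := by simp

private noncomputable def Zf {X Ω : Type*} (k : X → X → ℝ) (Xi : ℕ → Ω → X) (θ : ℝ)
    (p : ℕ × ℕ) (ω : Ω) : ℝ :=
  k (Xi p.1 ω) (Xi p.2 ω) - θ

private noncomputable def Sf {X Ω : Type*} (k : X → X → ℝ) (Xi : ℕ → Ω → X) (θ : ℝ)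
    (m : ℕ) (ω : Ω) : ℝ :=
  ∑ p ∈ (Finset.range m).offDiag, Zf k Xi θ p ω

/-- The kernel score `φ_k(P, y) = ∫∫ k(x,x') dP dP − 2 ∫ k(x,y) dP`. -/
noncomputable def kernelScore {X : Type*} [MeasurableSpace X] (k : X → X → ℝ)
    (P : Measure X) (y : X) : ℝ :=
  (∫ x, (∫ x', k x x' ∂P) ∂P) - 2 * ∫ x, k x y ∂P

theorem kernelScore_estimator_strongly_consistent
    {X : Type*} [MeasurableSpace X] (P : Measure X) [IsProbabilityMeasure P]
    (k : X → X → ℝ) (hk_meas : Measurable fun p : X × X => k p.1 p.2)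
    (hk_bdd : ∃ C : ℝ, ∀ x y, |k x y| ≤ C)
    (hk_symm : ∀ x y, k x y = k y x)
    (y : X)
    {Ω : Type*} [MeasurableSpace Ω] (μ : Measure Ω) [IsProbabilityMeasure μ]
    (Xi : ℕ → Ω → X)
    (hXi_meas : ∀ n, Measurable (Xi n))
    (h_indep : ProbabilityTheory.iIndepFun Xi μ)
    (h_law : ∀ n, μ.map (Xi n) = P) :
    ∀ᵐ ω ∂μ, Tendsto
      (fun m : ℕ => ((m : ℝ) * ((m : ℝ) - 1))⁻¹ *
          (∑ p ∈ (Finset.range m).offDiag, k (Xi p.1 ω) (Xi p.2 ω))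
        - (2 / (m : ℝ)) * ∑ i ∈ Finset.range m, k (Xi i ω) y)
      atTop (nhds (kernelScore k P y)) := by
  classical
  obtain ⟨C, hC⟩ := hk_bdd
  have hC0 : 0 ≤ C := le_trans (abs_nonneg _) (hC y y)
  -- notation
  set θ : ℝ := ∫ x, (∫ x', k x x' ∂P) ∂P with hθdef
  set θy : ℝ := ∫ x, k x y ∂P with hθydef
  -- basic measurability
  have hky : Measurable fun x => k x y := hk_meas.comp (measurable_id.prodMk measurable_const)
  have hkij : ∀ i j : ℕ, Measurable fun ω => k (Xi i ω) (Xi j ω) :=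
    fun i j => hk_meas.comp ((hXi_meas i).prodMk (hXi_meas j))
  -- integrability helper
  have int_bdd : ∀ {f : Ω → ℝ}, Measurable f → ∀ D : ℝ, (∀ ω, |f ω| ≤ D) → Integrable f μ := by
    intro f hf D hfD
    exact (integrable_const D).mono' hf.aestronglyMeasurable
      (Eventually.of_forall fun ω => by simpa [Real.norm_eq_abs] using hfD ω)
  -- |θ| ≤ C
  have habsθ : |θ| ≤ C := by
    rw [hθdef]
    exact abs_integral_le_of_bdd P (fun x => ∫ x', k x x' ∂P) C (fun x => abs_integral_le_of_bdd P (fun x' => k x x') C (hC x))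
  -- law of pairs
  have h_pair : ∀ i j : ℕ, i ≠ j → μ.map (fun ω => (Xi i ω, Xi j ω)) = P.prod P := by
    intro i j hij
    rw [(ProbabilityTheory.indepFun_iff_map_prod_eq_prod_map_map (hXi_meas i).aemeasurable
      (hXi_meas j).aemeasurable).mp (h_indep.indepFun hij), h_law i, h_law j]
  have int_k_prod : Integrable (fun p : X × X => k p.1 p.2) (P.prod P) :=
    (integrable_const C).mono' hk_meas.aestronglyMeasurable
      (Eventually.of_forall fun p => by simpa [Real.norm_eq_abs] using hC p.1 p.2)
  have hθ_prod : ∫ p, k p.1 p.2 ∂(P.prod P) = θ := by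
    rw [hθdef, MeasureTheory.integral_prod _ int_k_prod]
  have E_pair : ∀ i j : ℕ, i ≠ j → ∫ ω, k (Xi i ω) (Xi j ω) ∂μ = θ := by
    intro i j hij
    have hmp : AEMeasurable (fun ω => (Xi i ω, Xi j ω)) μ :=
      ((hXi_meas i).prodMk (hXi_meas j)).aemeasurable
    rw [← hθ_prod, ← h_pair i j hij, integral_map hmp hk_meas.aestronglyMeasurable]

  -- facts about Z
  have meas_Z : ∀ p : ℕ × ℕ, Measurable (Zf k Xi θ p) :=
    fun p => (hkij p.1 p.2).sub measurable_const
  have bZ : ∀ (p : ℕ × ℕ) (ω : Ω), |Zf k Xi θ p ω| ≤ 2 * C := by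
    intro p ω
    have h1 := hC (Xi p.1 ω) (Xi p.2 ω)
    calc |Zf k Xi θ p ω| = |k (Xi p.1 ω) (Xi p.2 ω) - θ| := rfl
      _ ≤ |k (Xi p.1 ω) (Xi p.2 ω)| + |θ| := abs_sub _ _
      _ ≤ 2 * C := by linarith
  have int_Z : ∀ p : ℕ × ℕ, Integrable (Zf k Xi θ p) μ :=
    fun p => int_bdd (meas_Z p) (2 * C) (bZ p)
  have EZ : ∀ p : ℕ × ℕ, p.1 ≠ p.2 → ∫ ω, Zf k Xi θ p ω ∂μ = 0 := by
    intro p hp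
    have he : ∫ ω, Zf k Xi θ p ω ∂μ = ∫ ω, (k (Xi p.1 ω) (Xi p.2 ω) - θ) ∂μ := rfl
    rw [he, integral_sub (int_bdd (hkij p.1 p.2) C (fun ω => hC _ _)) (integrable_const θ),
      integral_const, E_pair p.1 p.2 hp]
    simp
  have EZZ : ∀ p q : ℕ × ℕ, p.1 ≠ p.2 → q.1 ≠ q.2 → p.1 ≠ q.1 → p.1 ≠ q.2 → p.2 ≠ q.1 →
      p.2 ≠ q.2 → ∫ ω, Zf k Xi θ p ω * Zf k Xi θ q ω ∂μ = 0 := by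
    intro p q hp hq h1 h2 h3 h4
    have hpair := h_indep.indepFun_prodMk_prodMk hXi_meas p.1 p.2 q.1 q.2 h1 h2 h3 h4
    have hφ : Measurable (fun x : X × X => k x.1 x.2 - θ) := hk_meas.sub measurable_const
    have hind : ProbabilityTheory.IndepFun (Zf k Xi θ p) (Zf k Xi θ q) μ := hpair.comp hφ hφ
    exact (hind.integral_mul_eq_mul_integral (int_Z p).aestronglyMeasurable (int_Z q).aestronglyMeasurable).trans
      (by rw [EZ p hp, zero_mul])
  have int_ZZ : ∀ p q : ℕ × ℕ, Integrable (fun ω => Zf k Xi θ p ω * Zf k Xi θ q ω) μ := by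
    intro p q
    refine int_bdd ((meas_Z p).mul (meas_Z q)) ((2 * C) * (2 * C)) (fun ω => ?_)
    rw [abs_mul]
    exact mul_le_mul (bZ p ω) (bZ q ω) (abs_nonneg _) (by linarith)
  have habs_ZZ : ∀ p q : ℕ × ℕ, |∫ ω, Zf k Xi θ p ω * Zf k Xi θ q ω ∂μ| ≤ 4 * C ^ 2 :=
    fun p q => abs_integral_le_of_bdd μ (fun ω => Zf k Xi θ p ω * Zf k Xi θ q ω) (4 * C ^ 2)
      (fun ω => by
        rw [abs_mul]
        nlinarith [bZ p ω, bZ q ω, abs_nonneg (Zf k Xi θ p ω), abs_nonneg (Zf k Xi θ q ω)])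
  -- variance bound
  have hvar : ∀ m : ℕ, ∫ ω, (Sf k Xi θ m ω) ^ 2 ∂μ ≤ 16 * C ^ 2 * (m : ℝ) ^ 3 := by
    intro m
    have hexp : ∀ ω, (Sf k Xi θ m ω) ^ 2 =
        ∑ r ∈ (Finset.range m).offDiag ×ˢ (Finset.range m).offDiag,
          Zf k Xi θ r.1 ω * Zf k Xi θ r.2 ω := by
      intro ω
      rw [show (Sf k Xi θ m ω) ^ 2 = (Sf k Xi θ m ω) * (Sf k Xi θ m ω) from sq _,
        show Sf k Xi θ m ω = ∑ p ∈ (Finset.range m).offDiag, Zf k Xi θ p ω from rfl,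
        Finset.sum_mul_sum, ← Finset.sum_product']
    calc ∫ ω, (Sf k Xi θ m ω) ^ 2 ∂μ
        = ∑ r ∈ (Finset.range m).offDiag ×ˢ (Finset.range m).offDiag,
            ∫ ω, Zf k Xi θ r.1 ω * Zf k Xi θ r.2 ω ∂μ := by
          simp_rw [hexp]
          exact integral_finset_sum _ (fun r _ => int_ZZ r.1 r.2)
      _ ≤ ∑ r ∈ (Finset.range m).offDiag ×ˢ (Finset.range m).offDiag,
            (if r.1.1 = r.2.1 ∨ r.1.1 = r.2.2 ∨ r.1.2 = r.2.1 ∨ r.1.2 = r.2.2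
              then 4 * C ^ 2 else 0) := by
          refine Finset.sum_le_sum (fun r hr => ?_)
          by_cases hov : r.1.1 = r.2.1 ∨ r.1.1 = r.2.2 ∨ r.1.2 = r.2.1 ∨ r.1.2 = r.2.2
          · rw [if_pos hov]
            exact (le_abs_self _).trans (habs_ZZ r.1 r.2)
          · rw [if_neg hov]
            push_neg at hov
            simp only [Finset.mem_product, Finset.mem_offDiag] at hr
            rw [EZZ r.1 r.2 hr.1.2.2 hr.2.2.2 hov.1 hov.2.1 hov.2.2.1 hov.2.2.2]
      _ = ((((Finset.range m).offDiag ×ˢ (Finset.range m).offDiag).filter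
            (fun r : (ℕ × ℕ) × ℕ × ℕ =>
              r.1.1 = r.2.1 ∨ r.1.1 = r.2.2 ∨ r.1.2 = r.2.1 ∨ r.1.2 = r.2.2)).card : ℝ)
            * (4 * C ^ 2) := by
          rw [Finset.sum_ite, Finset.sum_const, Finset.sum_const_zero, add_zero, nsmul_eq_mul]
      _ ≤ ((4 * m ^ 3 : ℕ) : ℝ) * (4 * C ^ 2) := by
          apply mul_le_mul_of_nonneg_right _ (by positivity)
          exact_mod_cast card_filter_overlap m
      _ = 16 * C ^ 2 * (m : ℝ) ^ 3 := by push_cast; ring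
  -- cardinality of offDiag
  have hnn : ∀ n : ℕ, n ≤ n * n := by
    intro n
    rcases n with _ | n
    · simp
    · exact Nat.le_mul_of_pos_left _ (Nat.succ_pos n)
  have hcard : ∀ n : ℕ, (((Finset.range n).offDiag.card : ℝ)) = (n : ℝ) * ((n : ℝ) - 1) := by
    intro n
    rw [Finset.offDiag_card, Finset.card_range, Nat.cast_sub (hnn n)]
    push_cast
    ring
  -- S bounds
  have hS0 : ∀ ω, Sf k Xi θ 0 ω = 0 := by
    intro ω
    simp [Sf]
  have hSd : ∀ (ω : Ω) (j m : ℕ), j ≤ m →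
      |Sf k Xi θ m ω - Sf k Xi θ j ω| ≤
        (2 * C) * ((m : ℝ) * ((m : ℝ) - 1) - (j : ℝ) * ((j : ℝ) - 1)) := by
    intro ω j m hjm
    have hsub : (Finset.range j).offDiag ⊆ (Finset.range m).offDiag :=
      Finset.offDiag_mono (Finset.range_subset_range.2 hjm)
    have hdiff : Sf k Xi θ m ω - Sf k Xi θ j ω
        = ∑ p ∈ (Finset.range m).offDiag \ (Finset.range j).offDiag, Zf k Xi θ p ω := by
      rw [Finset.sum_sdiff_eq_sub hsub]
      rfl
    rw [hdiff]
    have hcd : ((((Finset.range m).offDiag \ (Finset.range j).offDiag).card : ℝ))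
        = (m : ℝ) * ((m : ℝ) - 1) - (j : ℝ) * ((j : ℝ) - 1) := by
      rw [Finset.card_sdiff_of_subset hsub, Nat.cast_sub (Finset.card_le_card hsub), hcard, hcard]
    calc |∑ p ∈ (Finset.range m).offDiag \ (Finset.range j).offDiag, Zf k Xi θ p ω|
        ≤ ∑ p ∈ (Finset.range m).offDiag \ (Finset.range j).offDiag, |Zf k Xi θ p ω| :=
          Finset.abs_sum_le_sum_abs _ _
      _ ≤ ((Finset.range m).offDiag \ (Finset.range j).offDiag).card • (2 * C) :=
          Finset.sum_le_card_nsmul _ _ _ (fun p _ => bZ p ω)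
      _ = ((((Finset.range m).offDiag \ (Finset.range j).offDiag).card : ℝ)) * (2 * C) :=
          nsmul_eq_mul _ _
      _ = (2 * C) * ((m : ℝ) * ((m : ℝ) - 1) - (j : ℝ) * ((j : ℝ) - 1)) := by
          rw [hcd]; ring
  have meas_S : ∀ m : ℕ, Measurable (fun ω => Sf k Xi θ m ω) :=
    fun m => Finset.measurable_sum _ (fun p _ => meas_Z p)
  -- second moment of the subsequence estimator
  have hErr : ∀ n : ℕ,
      ∫ ω, ((((n ^ 2 : ℕ) : ℝ) * (((n ^ 2 : ℕ) : ℝ) - 1))⁻¹ * Sf k Xi θ (n ^ 2) ω) ^ 2 ∂μ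
        ≤ 64 * C ^ 2 / (n : ℝ) ^ 2 := by
    intro n
    rcases Nat.lt_or_ge n 2 with hn | hn
    · interval_cases n
      · norm_num [hS0]
      · have h1 : ∀ ω : Ω, Sf k Xi θ (1 ^ 2) ω = 0 := by
          intro ω
          show ∑ p ∈ (Finset.range 1).offDiag, Zf k Xi θ p ω = 0
          rw [Finset.range_one]
          simp
        simp only [h1]
        norm_num
        positivity
    · have hx : (2 : ℝ) ≤ (n : ℝ) := by exact_mod_cast hn
      have hM : (((n ^ 2 : ℕ) : ℝ) * (((n ^ 2 : ℕ) : ℝ) - 1))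
          = (n : ℝ) ^ 2 * ((n : ℝ) ^ 2 - 1) := by push_cast; ring
      have h4 : (4 : ℝ) ≤ (n : ℝ) ^ 2 := by nlinarith
      have hMpos : 0 < (n : ℝ) ^ 2 * ((n : ℝ) ^ 2 - 1) :=
        mul_pos (by linarith) (by linarith)
      calc ∫ ω, ((((n ^ 2 : ℕ) : ℝ) * (((n ^ 2 : ℕ) : ℝ) - 1))⁻¹ * Sf k Xi θ (n ^ 2) ω) ^ 2 ∂μ
          = (((n : ℝ) ^ 2 * ((n : ℝ) ^ 2 - 1))⁻¹) ^ 2 * ∫ ω, (Sf k Xi θ (n ^ 2) ω) ^ 2 ∂μ := by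
            simp_rw [mul_pow, hM]
            rw [integral_const_mul]
        _ ≤ (((n : ℝ) ^ 2 * ((n : ℝ) ^ 2 - 1))⁻¹) ^ 2 * (16 * C ^ 2 * ((n ^ 2 : ℕ) : ℝ) ^ 3) :=
            mul_le_mul_of_nonneg_left (hvar (n ^ 2)) (by positivity)
        _ = 16 * C ^ 2 * (n : ℝ) ^ 6 / ((n : ℝ) ^ 2 * ((n : ℝ) ^ 2 - 1)) ^ 2 := by
            have hcast3 : ((n ^ 2 : ℕ) : ℝ) ^ 3 = (n : ℝ) ^ 6 := by push_cast; ring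
            rw [hcast3, div_eq_mul_inv, ← inv_pow]
            ring
        _ ≤ 64 * C ^ 2 / (n : ℝ) ^ 2 := by
            rw [div_le_div_iff₀ (by positivity) (by positivity)]
            have h1 : (n : ℝ) ^ 2 / 2 ≤ (n : ℝ) ^ 2 - 1 := by nlinarith
            have h2 : ((n : ℝ) ^ 2 / 2) ^ 2 ≤ ((n : ℝ) ^ 2 - 1) ^ 2 :=
              pow_le_pow_left₀ (by positivity) h1 2
            nlinarith [mul_le_mul_of_nonneg_left h2
              (show (0 : ℝ) ≤ 64 * C ^ 2 * (n : ℝ) ^ 4 by positivity)]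

  -- measurability and integrability of the squared subsequence errors
  have meas_err : ∀ n : ℕ,
      Measurable (fun ω => ((((n ^ 2 : ℕ) : ℝ) * (((n ^ 2 : ℕ) : ℝ) - 1))⁻¹
        * Sf k Xi θ (n ^ 2) ω)) :=
    fun n => (meas_S (n ^ 2)).const_mul _
  have meas_errsq : ∀ n : ℕ,
      Measurable (fun ω => ENNReal.ofReal (((((n ^ 2 : ℕ) : ℝ) * (((n ^ 2 : ℕ) : ℝ) - 1))⁻¹
        * Sf k Xi θ (n ^ 2) ω) ^ 2)) :=
    fun n => ENNReal.measurable_ofReal.comp ((meas_err n).pow_const 2)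
  have hSb : ∀ (m : ℕ) (ω : Ω), |Sf k Xi θ m ω| ≤ 2 * C * ((m : ℝ) * ((m : ℝ) - 1)) := by
    intro m ω
    have := hSd ω 0 m (Nat.zero_le _)
    simpa [hS0] using this
  have int_errsq : ∀ n : ℕ,
      Integrable (fun ω => ((((n ^ 2 : ℕ) : ℝ) * (((n ^ 2 : ℕ) : ℝ) - 1))⁻¹
        * Sf k Xi θ (n ^ 2) ω) ^ 2) μ := by
    intro n
    set B : ℝ := (((n ^ 2 : ℕ) : ℝ) * (((n ^ 2 : ℕ) : ℝ) - 1))⁻¹ with hB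
    set M : ℝ := 2 * C * (((n ^ 2 : ℕ) : ℝ) * (((n ^ 2 : ℕ) : ℝ) - 1)) with hMd
    refine int_bdd ((meas_err n).pow_const 2) ((|B| * M) ^ 2) (fun ω => ?_)
    have h1 : |B * Sf k Xi θ (n ^ 2) ω| ≤ |B| * M := by
      rw [abs_mul]
      refine mul_le_mul_of_nonneg_left ?_ (abs_nonneg _)
      exact hSb (n ^ 2) ω
    calc |(B * Sf k Xi θ (n ^ 2) ω) ^ 2| = |B * Sf k Xi θ (n ^ 2) ω| ^ 2 := by
          rw [abs_pow]
      _ ≤ (|B| * M) ^ 2 := by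
          apply pow_le_pow_left₀ (abs_nonneg _) h1
  -- lintegral bound and a.e. convergence along squares
  have hlintb : ∀ n : ℕ,
      ∫⁻ ω, ENNReal.ofReal (((((n ^ 2 : ℕ) : ℝ) * (((n ^ 2 : ℕ) : ℝ) - 1))⁻¹
        * Sf k Xi θ (n ^ 2) ω) ^ 2) ∂μ ≤ ENNReal.ofReal (64 * C ^ 2 / (n : ℝ) ^ 2) := by
    intro n
    rw [← ofReal_integral_eq_lintegral_ofReal (int_errsq n)
      (Eventually.of_forall fun ω => sq_nonneg _)]
    exact ENNReal.ofReal_le_ofReal (hErr n)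
  have hsummable : Summable (fun n : ℕ => 64 * C ^ 2 / (n : ℝ) ^ 2) := by
    have h := Real.summable_one_div_nat_pow.mpr (by norm_num : 1 < 2)
    exact (h.mul_left (64 * C ^ 2)).congr (fun n => by rw [← mul_div_assoc, mul_one])
  have htsum : ∑' n : ℕ, ∫⁻ ω, ENNReal.ofReal (((((n ^ 2 : ℕ) : ℝ)
      * (((n ^ 2 : ℕ) : ℝ) - 1))⁻¹ * Sf k Xi θ (n ^ 2) ω) ^ 2) ∂μ ≠ ⊤ := by
    have h2 : ∑' n : ℕ, ENNReal.ofReal (64 * C ^ 2 / (n : ℝ) ^ 2) ≠ ⊤ := by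
      rw [← ENNReal.ofReal_tsum_of_nonneg (fun n => by positivity) hsummable]
      exact ENNReal.ofReal_ne_top
    exact ne_top_of_le_ne_top h2 (ENNReal.tsum_le_tsum hlintb)
  have hae1 : ∀ᵐ ω ∂μ, Tendsto (fun n : ℕ =>
      (((n ^ 2 : ℕ) : ℝ) * (((n ^ 2 : ℕ) : ℝ) - 1))⁻¹ * Sf k Xi θ (n ^ 2) ω)
      atTop (nhds 0) := by
    have hfin : ∀ᵐ ω ∂μ, (∑' n : ℕ, ENNReal.ofReal (((((n ^ 2 : ℕ) : ℝ)
        * (((n ^ 2 : ℕ) : ℝ) - 1))⁻¹ * Sf k Xi θ (n ^ 2) ω) ^ 2)) < ⊤ := by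
      refine ae_lt_top (Measurable.ennreal_tsum meas_errsq) ?_
      rw [lintegral_tsum (fun n => (meas_errsq n).aemeasurable)]
      exact htsum
    filter_upwards [hfin] with ω hω
    have h0 : Tendsto (fun n : ℕ => ENNReal.ofReal (((((n ^ 2 : ℕ) : ℝ)
        * (((n ^ 2 : ℕ) : ℝ) - 1))⁻¹ * Sf k Xi θ (n ^ 2) ω) ^ 2)) atTop (nhds 0) :=
      ENNReal.tendsto_atTop_zero_of_tsum_ne_top hω.ne
    have h1 : Tendsto (fun n : ℕ => ((((n ^ 2 : ℕ) : ℝ)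
        * (((n ^ 2 : ℕ) : ℝ) - 1))⁻¹ * Sf k Xi θ (n ^ 2) ω) ^ 2) atTop (nhds 0) := by
      have h2 := (ENNReal.tendsto_toReal (by simp : (0 : ENNReal) ≠ ⊤)).comp h0
      simp only [Function.comp_def, ENNReal.toReal_ofReal (sq_nonneg _), ENNReal.toReal_zero]
        at h2
      exact h2
    have h2 : Tendsto (fun n : ℕ => |(((n ^ 2 : ℕ) : ℝ)
        * (((n ^ 2 : ℕ) : ℝ) - 1))⁻¹ * Sf k Xi θ (n ^ 2) ω|) atTop (nhds 0) := by
      have h3 := (Real.continuous_sqrt.tendsto 0).comp h1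
      simp only [Function.comp_def, Real.sqrt_sq_eq_abs, Real.sqrt_zero] at h3
      exact h3
    exact squeeze_zero_norm (fun n => le_of_eq (Real.norm_eq_abs _)) h2
  -- strong law of large numbers for the linear part
  have hae2 : ∀ᵐ ω ∂μ, Tendsto (fun m : ℕ =>
      (∑ i ∈ Finset.range m, k (Xi i ω) y) / (m : ℝ)) atTop (nhds θy) := by
    have hint : Integrable (fun ω => k (Xi 0 ω) y) μ :=
      int_bdd (hky.comp (hXi_meas 0)) C (fun ω => hC _ _)
    have hindep : Pairwise (Function.onFun (ProbabilityTheory.IndepFun · · μ) fun i ω => k (Xi i ω) y) :=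
      fun i j hij => ProbabilityTheory.IndepFun.comp (h_indep.indepFun hij) hky hky
    have hident : ∀ i : ℕ, ProbabilityTheory.IdentDistrib (fun ω => k (Xi i ω) y)
        (fun ω => k (Xi 0 ω) y) μ μ := by
      intro i
      have hid : ProbabilityTheory.IdentDistrib (Xi i) (Xi 0) μ μ :=
        ⟨(hXi_meas i).aemeasurable, (hXi_meas 0).aemeasurable, by rw [h_law, h_law]⟩
      exact hid.comp hky
    have h := ProbabilityTheory.strong_law_ae_real _ hint hindep hident
    have he : ∫ x, k (Xi 0 x) y ∂μ = θy := by
      rw [hθydef, ← h_law 0, integral_map (hXi_meas 0).aemeasurable hky.aestronglyMeasurable]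
    rwa [he] at h
  -- decomposition identity
  have hkey : ∀ (ω : Ω) (m : ℕ), 2 ≤ m →
      ((m : ℝ) * ((m : ℝ) - 1))⁻¹ * (∑ p ∈ (Finset.range m).offDiag, k (Xi p.1 ω) (Xi p.2 ω))
        = ((m : ℝ) * ((m : ℝ) - 1))⁻¹ * Sf k Xi θ m ω + θ := by
    intro ω m hm
    have hm2 : (2 : ℝ) ≤ (m : ℝ) := by exact_mod_cast hm
    have hM : ((m : ℝ) * ((m : ℝ) - 1)) ≠ 0 :=
      (mul_pos (by linarith) (by linarith)).ne'
    have hsum : ∑ p ∈ (Finset.range m).offDiag, k (Xi p.1 ω) (Xi p.2 ω)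
        = Sf k Xi θ m ω + ((Finset.range m).offDiag.card : ℝ) * θ := by
      rw [show Sf k Xi θ m ω
          = ∑ p ∈ (Finset.range m).offDiag, (k (Xi p.1 ω) (Xi p.2 ω) - θ) from rfl,
        Finset.sum_sub_distrib, Finset.sum_const, nsmul_eq_mul]
      ring
    rw [hsum, hcard m, mul_add, ← mul_assoc, inv_mul_cancel₀ hM, one_mul]
  -- put everything together
  filter_upwards [hae1, hae2] with ω h1 h2
  have hA : Tendsto (fun m : ℕ => ((m : ℝ) * ((m : ℝ) - 1))⁻¹ * Sf k Xi θ m ω)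
      atTop (nhds 0) :=
    interp_tendsto (2 * C) (by positivity) (fun m => Sf k Xi θ m ω)
      (fun j m hjm => hSd ω j m hjm) (hS0 ω) h1
  have hB : Tendsto (fun m : ℕ =>
      2 * ((∑ i ∈ Finset.range m, k (Xi i ω) y) / (m : ℝ))) atTop (nhds (2 * θy)) :=
    h2.const_mul 2
  have hall : Tendsto (fun m : ℕ =>
      (((m : ℝ) * ((m : ℝ) - 1))⁻¹ * Sf k Xi θ m ω + θ)
        - 2 * ((∑ i ∈ Finset.range m, k (Xi i ω) y) / (m : ℝ)))
      atTop (nhds ((0 + θ) - 2 * θy)) :=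
    (hA.add tendsto_const_nhds).sub hB
  have hks : kernelScore k P y = (0 + θ) - 2 * θy := by
    rw [kernelScore, ← hθdef, ← hθydef]
    ring
  rw [hks]
  refine Tendsto.congr' ?_ hall
  filter_upwards [eventually_ge_atTop 2] with m hm
  rw [← hkey ω m hm]
  have hr : (2 / (m : ℝ)) * ∑ i ∈ Finset.range m, k (Xi i ω) y
      = 2 * ((∑ i ∈ Finset.range m, k (Xi i ω) y) / (m : ℝ)) := by ring
  rw [hr]
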